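/- The Fock module W_p is irreducible under the action of the operators a_i^± (i = 1,…,m+n): the only subspaces of W_p invariant under all of the operators a_1^±,…,a_{m+n}^± are {0} and W_p itself. Equivalently, for any nonzero vector x ∈ W_p, the smallest subspace containing x and invariant under all a_i^± equals W_p. -/

import Mathlib

/-- Labels of the Fock basis vectors: occupation numbers
`r₁,…,r_{m₁}, l₁,…,l_{m₂}, θ₁,…,θ_{n₁}, λ₁,…,λ_{n₂}`. -/
structure FLabel (m₁ m₂ n₁ n₂ : ℕ) where
  r : Fin m₁ → ℕ
  l : Fin m₂ → ℕ
  th : Fin n₁ → ℕ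
  la : Fin n₂ → ℕ

/-- The total occupation number `R = Σr + Σl + Σθ + Σλ`. -/
def FLabel.R {m₁ m₂ n₁ n₂ : ℕ} (x : FLabel m₁ m₂ n₁ n₂) : ℕ :=
  (∑ i, x.r i) + (∑ i, x.l i) + (∑ i, x.th i) + (∑ i, x.la i)

/-- Valid labels: `θ_i, λ_i ∈ {0,1}` and `R ≤ p`. -/
def FLabel.Valid {m₁ m₂ n₁ n₂ : ℕ} (p : ℕ) (x : FLabel m₁ m₂ n₁ n₂) : Prop :=
  (∀ i, x.th i ≤ 1) ∧ (∀ i, x.la i ≤ 1) ∧ x.R ≤ p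

/-- The index set of the orthonormal basis of `W_p`. -/
def FIdx (m₁ m₂ n₁ n₂ p : ℕ) := {x : FLabel m₁ m₂ n₁ n₂ // x.Valid p}

/-- The Fock space `W_p`: the real vector space with basis indexed by `FIdx`,
realized as finitely supported functions; the basis vector at `x` is `Finsupp.single x 1`. -/
abbrev W (m₁ m₂ n₁ n₂ p : ℕ) := FIdx m₁ m₂ n₁ n₂ p →₀ ℝ

/-- Extend a map defined on basis vectors to a linear operator on `W_p`. -/
noncomputable def extOp {m₁ m₂ n₁ n₂ p : ℕ}
    (g : FIdx m₁ m₂ n₁ n₂ p → W m₁ m₂ n₁ n₂ p) :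
    W m₁ m₂ n₁ n₂ p →ₗ[ℝ] W m₁ m₂ n₁ n₂ p :=
  Finsupp.lsum ℝ fun x => LinearMap.toSpanSingleton ℝ _ (g x)

open Classical in
/-- `c` times the basis vector labelled `x'` if `x'` is a valid label, and `0` otherwise. -/
noncomputable def bvec {m₁ m₂ n₁ n₂ : ℕ} (p : ℕ) (x' : FLabel m₁ m₂ n₁ n₂) (c : ℝ) :
    W m₁ m₂ n₁ n₂ p :=
  if h : x'.Valid p then c • Finsupp.single ⟨x', h⟩ 1 else 0

/-- `b_i^+`. -/
noncomputable def bP {m₁ m₂ n₁ n₂ p : ℕ} (i : Fin m₁) :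
    W m₁ m₂ n₁ n₂ p →ₗ[ℝ] W m₁ m₂ n₁ n₂ p :=
  extOp fun x =>
    bvec p { x.1 with r := Function.update x.1.r i (x.1.r i + 1) }
      (Real.sqrt (((x.1.r i + 1) * (p - x.1.R) : ℕ) : ℝ))

/-- `b_i^-`. -/
noncomputable def bM {m₁ m₂ n₁ n₂ p : ℕ} (i : Fin m₁) :
    W m₁ m₂ n₁ n₂ p →ₗ[ℝ] W m₁ m₂ n₁ n₂ p :=
  extOp fun x =>
    bvec p { x.1 with r := Function.update x.1.r i (x.1.r i - 1) }
      (Real.sqrt ((x.1.r i * (p - x.1.R + 1) : ℕ) : ℝ))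

/-- `b̃_i^+`. -/
noncomputable def btP {m₁ m₂ n₁ n₂ p : ℕ} (i : Fin m₂) :
    W m₁ m₂ n₁ n₂ p →ₗ[ℝ] W m₁ m₂ n₁ n₂ p :=
  extOp fun x =>
    bvec p { x.1 with l := Function.update x.1.l i (x.1.l i + 1) }
      (Real.sqrt (((x.1.l i + 1) * (p - x.1.R) : ℕ) : ℝ))

/-- `b̃_i^-`. -/
noncomputable def btM {m₁ m₂ n₁ n₂ p : ℕ} (i : Fin m₂) :
    W m₁ m₂ n₁ n₂ p →ₗ[ℝ] W m₁ m₂ n₁ n₂ p :=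
  extOp fun x =>
    bvec p { x.1 with l := Function.update x.1.l i (x.1.l i - 1) }
      (Real.sqrt ((x.1.l i * (p - x.1.R + 1) : ℕ) : ℝ))

/-- The sign `(−1)^{l₁+⋯+l_{m₂}}`. -/
noncomputable def sgnl {m₁ m₂ n₁ n₂ : ℕ} (x : FLabel m₁ m₂ n₁ n₂) : ℝ :=
  (-1 : ℝ) ^ (∑ i, x.l i)

/-- The sign `(−1)^{θ₁+⋯+θ_{i−1}}`. -/
noncomputable def sgnth {m₁ m₂ n₁ n₂ : ℕ} (x : FLabel m₁ m₂ n₁ n₂) (i : Fin n₁) : ℝ :=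
  (-1 : ℝ) ^ (∑ j ∈ Finset.Iio i, x.th j)

/-- The sign `(−1)^{λ₁+⋯+λ_{i−1}}`. -/
noncomputable def sgnla {m₁ m₂ n₁ n₂ : ℕ} (x : FLabel m₁ m₂ n₁ n₂) (i : Fin n₂) : ℝ :=
  (-1 : ℝ) ^ (∑ j ∈ Finset.Iio i, x.la j)

/-- `f_i^+`. -/
noncomputable def fP {m₁ m₂ n₁ n₂ p : ℕ} (i : Fin n₁) :
    W m₁ m₂ n₁ n₂ p →ₗ[ℝ] W m₁ m₂ n₁ n₂ p :=
  extOp fun x =>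
    bvec p { x.1 with th := Function.update x.1.th i (x.1.th i + 1) }
      (((1 : ℝ) - (x.1.th i : ℝ)) * sgnl x.1 * sgnth x.1 i *
        Real.sqrt ((p - x.1.R : ℕ) : ℝ))

/-- `f_i^-`. -/
noncomputable def fM {m₁ m₂ n₁ n₂ p : ℕ} (i : Fin n₁) :
    W m₁ m₂ n₁ n₂ p →ₗ[ℝ] W m₁ m₂ n₁ n₂ p :=
  extOp fun x =>
    bvec p { x.1 with th := Function.update x.1.th i (x.1.th i - 1) }
      ((x.1.th i : ℝ) * sgnl x.1 * sgnth x.1 i *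
        Real.sqrt ((p - x.1.R + 1 : ℕ) : ℝ))

/-- `f̃_i^+`. -/
noncomputable def ftP {m₁ m₂ n₁ n₂ p : ℕ} (i : Fin n₂) :
    W m₁ m₂ n₁ n₂ p →ₗ[ℝ] W m₁ m₂ n₁ n₂ p :=
  extOp fun x =>
    bvec p { x.1 with la := Function.update x.1.la i (x.1.la i + 1) }
      (((1 : ℝ) - (x.1.la i : ℝ)) * sgnl x.1 * sgnla x.1 i *
        Real.sqrt ((p - x.1.R : ℕ) : ℝ))

/-- `f̃_i^-`. -/
noncomputable def ftM {m₁ m₂ n₁ n₂ p : ℕ} (i : Fin n₂) :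
    W m₁ m₂ n₁ n₂ p →ₗ[ℝ] W m₁ m₂ n₁ n₂ p :=
  extOp fun x =>
    bvec p { x.1 with la := Function.update x.1.la i (x.1.la i - 1) }
      ((x.1.la i : ℝ) * sgnl x.1 * sgnla x.1 i *
        Real.sqrt ((p - x.1.R + 1 : ℕ) : ℝ))

/-- The creation operators `a_i^+`, `i = 1, …, m+n` (here indexed by `Fin (m+n)`). -/
noncomputable def aP {m₁ m₂ n₁ n₂ p : ℕ} (i : Fin (m₁+m₂+n₁+n₂)) :
    W m₁ m₂ n₁ n₂ p →ₗ[ℝ] W m₁ m₂ n₁ n₂ p :=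
  if h1 : i.val < m₁ then bP ⟨i.val, h1⟩
  else if h2 : i.val < m₁ + m₂ then btP ⟨i.val - m₁, by omega⟩
  else if h3 : i.val < m₁ + m₂ + n₁ then fP ⟨i.val - (m₁ + m₂), by omega⟩
  else ftP ⟨i.val - (m₁ + m₂ + n₁), by have := i.isLt; omega⟩

/-- The annihilation operators `a_i^-`, `i = 1, …, m+n` (here indexed by `Fin (m+n)`). -/
noncomputable def aM {m₁ m₂ n₁ n₂ p : ℕ} (i : Fin (m₁+m₂+n₁+n₂)) :
    W m₁ m₂ n₁ n₂ p →ₗ[ℝ] W m₁ m₂ n₁ n₂ p :=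
  if h1 : i.val < m₁ then bM ⟨i.val, h1⟩
  else if h2 : i.val < m₁ + m₂ then btM ⟨i.val - m₁, by omega⟩
  else if h3 : i.val < m₁ + m₂ + n₁ then fM ⟨i.val - (m₁ + m₂), by omega⟩
  else ftM ⟨i.val - (m₁ + m₂ + n₁), by have := i.isLt; omega⟩

/-- The degree `d_i ∈ ℤ₂×ℤ₂` of `a_i^±`. -/
def deg {m₁ m₂ n₁ n₂ : ℕ} (i : Fin (m₁+m₂+n₁+n₂)) : ZMod 2 × ZMod 2 :=
  if i.val < m₁ then (0, 0)
  else if i.val < m₁ + m₂ then (1, 1)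
  else if i.val < m₁ + m₂ + n₁ then (1, 0)
  else (0, 1)

/-- The sign `(−1)^{a·b}` with `a·b = a₁b₁ + a₂b₂ ∈ ℤ₂`. -/
noncomputable def sgn (a b : ZMod 2 × ZMod 2) : ℝ :=
  (-1 : ℝ) ^ (a.1 * b.1 + a.2 * b.2 : ZMod 2).val

/-- The bracket `⟦X,Y⟧ = X∘Y − (−1)^{a·b} Y∘X` of operators of degrees `a`, `b`. -/
noncomputable def bb {m₁ m₂ n₁ n₂ p : ℕ} (a b : ZMod 2 × ZMod 2)
    (X Y : W m₁ m₂ n₁ n₂ p →ₗ[ℝ] W m₁ m₂ n₁ n₂ p) :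
    W m₁ m₂ n₁ n₂ p →ₗ[ℝ] W m₁ m₂ n₁ n₂ p :=
  X ∘ₗ Y - sgn a b • (Y ∘ₗ X)

/-!
Annihilation operators drive every nonzero invariant vector down to the vacuum. If a basis
vector `y` in the support of `v` has positive occupation in mode `i`, then `a_i^-` kills or
lowers each basis vector, injectively on those it does not kill, so `a_i^- v` is nonzero and
its support has strictly smaller total occupation. Once the vacuum lies in `U`, creation
operators reach every basis vector: `a_i^+` sends a basis vector to a nonzero multiple of the
raised one whenever the raised label is valid, since the factors `√(p - R)` and `1 - θ_i`
vanish only when it is not.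
-/

theorem Finset.sum_univ_update_add {ι M : Type*} [Fintype ι] [DecidableEq ι] [AddCommMonoid M]
    (g : ι → M) (j : ι) (b : M) : (∑ i, Function.update g j b i) + g j = b + ∑ i, g i := by
  rw [Finset.sum_update_of_mem (Finset.mem_univ j), ← Finset.add_sum_erase _ _ (Finset.mem_univ j),
    Finset.sdiff_singleton_eq_erase]
  abel

theorem Finsupp.linearMap_apply_eq_sum {ι κ R : Type*} [CommSemiring R]
    (T : (ι →₀ R) →ₗ[R] (κ →₀ R)) (v : ι →₀ R) (z : κ) :
    T v z = ∑ x ∈ v.support, v x * T (Finsupp.single x 1) z := by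
  conv_lhs => rw [← v.sum_single]
  rw [map_finsuppSum, Finsupp.sum, Finsupp.finsetSum_apply]
  refine Finset.sum_congr rfl fun x _ => ?_
  rw [← Finsupp.smul_single_one, map_smul, Finsupp.smul_apply, smul_eq_mul]

theorem Finsupp.single_one_mem_of_support_subset {ι K : Type*} [Field K]
    {U : Submodule K (ι →₀ K)} {v : ι →₀ K} {y : ι} (hv : v ∈ U) (hy : v y ≠ 0)
    (hsupp : v.support ⊆ {y}) : Finsupp.single y 1 ∈ U := by
  rw [Finsupp.eq_single_iff.2 ⟨hsupp, rfl⟩] at hv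
  simpa [hy] using U.smul_mem (v y)⁻¹ hv

theorem Submodule.eq_top_of_forall_single_one_mem {ι K : Type*} [Field K]
    {U : Submodule K (ι →₀ K)} (h : ∀ x, Finsupp.single x 1 ∈ U) : U = ⊤ := by
  rw [eq_top_iff, ← Finsupp.basisSingleOne.span_eq, Submodule.span_le]
  rintro _ ⟨x, rfl⟩
  simpa using h x

namespace FLabel

variable {m₁ m₂ n₁ n₂ : ℕ}

def occ (i : Fin (m₁+m₂+n₁+n₂)) (x : FLabel m₁ m₂ n₁ n₂) : ℕ :=
  if h1 : i.val < m₁ then x.r ⟨i.val, h1⟩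
  else if h2 : i.val < m₁ + m₂ then x.l ⟨i.val - m₁, by omega⟩
  else if h3 : i.val < m₁ + m₂ + n₁ then x.th ⟨i.val - (m₁ + m₂), by omega⟩
  else x.la ⟨i.val - (m₁ + m₂ + n₁), by have := i.isLt; omega⟩

def mapOcc (i : Fin (m₁+m₂+n₁+n₂)) (f : ℕ → ℕ) (x : FLabel m₁ m₂ n₁ n₂) : FLabel m₁ m₂ n₁ n₂ :=
  if h1 : i.val < m₁ then { x with r := Function.update x.r ⟨i.val, h1⟩ (f (x.r ⟨i.val, h1⟩)) }
  else if h2 : i.val < m₁ + m₂ then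
    let j : Fin m₂ := ⟨i.val - m₁, by omega⟩
    { x with l := Function.update x.l j (f (x.l j)) }
  else if h3 : i.val < m₁ + m₂ + n₁ then
    let j : Fin n₁ := ⟨i.val - (m₁ + m₂), by omega⟩
    { x with th := Function.update x.th j (f (x.th j)) }
  else
    let j : Fin n₂ := ⟨i.val - (m₁ + m₂ + n₁), by have := i.isLt; omega⟩
    { x with la := Function.update x.la j (f (x.la j)) }

theorem sum_occ (x : FLabel m₁ m₂ n₁ n₂) : ∑ i, x.occ i = x.R := by
  simp only [Fin.sum_univ_add, occ, R, Fin.val_castAdd, Fin.val_natAdd]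
  congr 1; congr 1; congr 1
  all_goals exact Finset.sum_congr rfl fun j _ => by split_ifs <;> first | omega | simp

theorem exists_occ_pos {x : FLabel m₁ m₂ n₁ n₂} (h : 0 < x.R) : ∃ i, 0 < x.occ i := by
  rw [← sum_occ] at h
  simpa using Finset.sum_pos_iff.mp h

theorem eq_of_R_eq_zero {x y : FLabel m₁ m₂ n₁ n₂} (hx : x.R = 0) (hy : y.R = 0) : x = y := by
  simp only [R, Nat.add_eq_zero_iff, Finset.sum_eq_zero_iff, Finset.mem_univ, true_imp_iff] at hx hy
  cases x; cases y
  simp_all [funext_iff]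

theorem occ_mapOcc (i : Fin (m₁+m₂+n₁+n₂)) (f : ℕ → ℕ) (x : FLabel m₁ m₂ n₁ n₂) :
    (x.mapOcc i f).occ = Function.update x.occ i (f (x.occ i)) := by
  funext j
  rcases eq_or_ne j i with rfl | hji
  · unfold mapOcc occ
    split_ifs <;> simp
  · rw [Function.update_of_ne hji]
    rw [Ne, Fin.ext_iff] at hji
    unfold mapOcc occ
    split_ifs <;> simp only [Function.update_apply, Fin.ext_iff] <;> split_ifs <;> first | rfl | omega

theorem R_mapOcc (i : Fin (m₁+m₂+n₁+n₂)) (f : ℕ → ℕ) (x : FLabel m₁ m₂ n₁ n₂) :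
    (x.mapOcc i f).R + x.occ i = f (x.occ i) + x.R := by
  rw [← sum_occ, ← sum_occ, occ_mapOcc, Finset.sum_univ_update_add]

theorem mapOcc_mapOcc (i : Fin (m₁+m₂+n₁+n₂)) (f g : ℕ → ℕ) (x : FLabel m₁ m₂ n₁ n₂) :
    (x.mapOcc i g).mapOcc i f = x.mapOcc i (f ∘ g) := by
  unfold mapOcc
  split_ifs <;> simp

theorem mapOcc_eq_self {i : Fin (m₁+m₂+n₁+n₂)} {f : ℕ → ℕ} {x : FLabel m₁ m₂ n₁ n₂}
    (h : f (x.occ i) = x.occ i) : x.mapOcc i f = x := by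
  unfold mapOcc
  unfold occ at h
  split_ifs at h ⊢ <;> simp [h]

theorem mapOcc_succ_mapOcc_pred {i : Fin (m₁+m₂+n₁+n₂)} {x : FLabel m₁ m₂ n₁ n₂}
    (h : 0 < x.occ i) : (x.mapOcc i (· - 1)).mapOcc i (· + 1) = x := by
  rw [mapOcc_mapOcc]
  exact mapOcc_eq_self (Nat.sub_add_cancel h)

-- Lowering uses truncated subtraction, so it never leaves the valid labels.
theorem valid_mapOcc_pred {p : ℕ} (i : Fin (m₁+m₂+n₁+n₂)) {x : FLabel m₁ m₂ n₁ n₂}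
    (hx : x.Valid p) : (x.mapOcc i (· - 1)).Valid p := by
  have hR := R_mapOcc i (· - 1) x
  obtain ⟨hth, hla, hxR⟩ := hx
  refine ⟨fun j => ?_, fun j => ?_, by omega⟩ <;>
  · unfold mapOcc
    split_ifs <;> simp only [Function.update_apply] <;> grind

end FLabel

section Operators

variable {m₁ m₂ n₁ n₂ p : ℕ}

theorem extOp_single (g : FIdx m₁ m₂ n₁ n₂ p → W m₁ m₂ n₁ n₂ p) (x : FIdx m₁ m₂ n₁ n₂ p) :
    extOp g (Finsupp.single x 1) = g x := by
  simp [extOp]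

theorem bvec_eq_smul_single {x' : FLabel m₁ m₂ n₁ n₂} (c : ℝ) (y : FIdx m₁ m₂ n₁ n₂ p)
    (hy : y.1 = x') : bvec p x' c = c • Finsupp.single y 1 := by
  subst hy
  exact dif_pos y.2

theorem bvec_apply_of_ne {x' : FLabel m₁ m₂ n₁ n₂} (c : ℝ) {z : FIdx m₁ m₂ n₁ n₂ p}
    (hz : z.1 ≠ x') : bvec p x' c z = 0 := by
  by_cases hx' : x'.Valid p
  · obtain ⟨y, rfl⟩ : ∃ y : FIdx m₁ m₂ n₁ n₂ p, y.1 = x' := ⟨⟨x', hx'⟩, rfl⟩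
    rw [bvec_eq_smul_single c y rfl, Finsupp.smul_apply,
      Finsupp.single_eq_of_ne fun he => hz (by rw [he]), smul_zero]
  · simp [bvec, hx']

theorem aM_single (i : Fin (m₁+m₂+n₁+n₂)) (x : FIdx m₁ m₂ n₁ n₂ p) :
    ∃ c : ℝ, (c ≠ 0 ↔ 0 < x.1.occ i) ∧
      aM i (Finsupp.single x 1) = bvec p (x.1.mapOcc i (· - 1)) c := by
  unfold aM FLabel.occ FLabel.mapOcc
  split_ifs
  all_goals
    simp only [bM, btM, fM, ftM, extOp_single]
    refine ⟨_, ?_, rfl⟩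
    simp [sgnl, sgnth, sgnla, Nat.pos_iff_ne_zero, Real.sqrt_eq_zero']
    exact fun _ => by positivity

theorem aP_single (i : Fin (m₁+m₂+n₁+n₂)) (x : FIdx m₁ m₂ n₁ n₂ p)
    (h : (x.1.mapOcc i (· + 1)).Valid p) :
    ∃ c : ℝ, c ≠ 0 ∧ aP i (Finsupp.single x 1) = bvec p (x.1.mapOcc i (· + 1)) c := by
  have hR : x.1.R < p := by
    have := FLabel.R_mapOcc i (· + 1) x.1
    have := h.2.2
    omega
  obtain ⟨hth, hla, -⟩ := h
  unfold aP FLabel.mapOcc at *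
  split_ifs at hth hla ⊢
  all_goals
    simp only [bP, btP, fP, ftP, extOp_single]
    refine ⟨_, ?_, rfl⟩
  · simp [Real.sqrt_eq_zero', Nat.sub_eq_zero_iff_le, hR, Nat.cast_add_one_pos]
  · simp [Real.sqrt_eq_zero', Nat.sub_eq_zero_iff_le, hR, Nat.cast_add_one_pos]
  · have := hth ⟨i - (m₁ + m₂), by omega⟩
    simp_all [sgnl, sgnth, Nat.sub_eq_zero_iff_le]
  · have := hla ⟨i - (m₁ + m₂ + n₁), by omega⟩
    simp_all [sgnl, sgnla, Nat.sub_eq_zero_iff_le]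

theorem aM_single_apply_ne_zero {i : Fin (m₁+m₂+n₁+n₂)} {x z : FIdx m₁ m₂ n₁ n₂ p}
    (h : aM i (Finsupp.single x 1) z ≠ 0) : 0 < x.1.occ i ∧ z.1 = x.1.mapOcc i (· - 1) := by
  obtain ⟨c, hc, he⟩ := aM_single i x
  rw [he] at h
  refine ⟨hc.1 fun hc0 => h ?_, by_contra fun hz => h (bvec_apply_of_ne c hz)⟩
  simp [hc0, bvec]

end Operators

section Irreducibility

variable {m₁ m₂ n₁ n₂ p : ℕ}

theorem aM_ne_zero {i : Fin (m₁+m₂+n₁+n₂)} {v : W m₁ m₂ n₁ n₂ p} {y : FIdx m₁ m₂ n₁ n₂ p}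
    (hy : v y ≠ 0) (hocc : 0 < y.1.occ i) : aM i v ≠ 0 := by
  let z : FIdx m₁ m₂ n₁ n₂ p := ⟨y.1.mapOcc i (· - 1), FLabel.valid_mapOcc_pred i y.2⟩
  obtain ⟨c, hc, he⟩ := aM_single i y
  rw [bvec_eq_smul_single c z rfl] at he
  have hothers : ∀ x ∈ v.support, x ≠ y → v x * aM i (Finsupp.single x 1) z = 0 := by
    intro x _ hxy
    by_contra hx
    obtain ⟨hxocc, hzx⟩ := aM_single_apply_ne_zero (right_ne_zero_of_mul hx)
    refine hxy (Subtype.ext ?_)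
    rw [← FLabel.mapOcc_succ_mapOcc_pred hxocc, ← FLabel.mapOcc_succ_mapOcc_pred hocc, ← hzx]
  intro h0
  have hz : aM i v z = v y * c := by
    rw [Finsupp.linearMap_apply_eq_sum, Finset.sum_eq_single_of_mem y
      (Finsupp.mem_support_iff.2 hy) hothers, he]
    simp
  simp [h0, hy, hc.2 hocc] at hz

theorem exists_R_eq_succ_of_mem_support_aM {i : Fin (m₁+m₂+n₁+n₂)} {v : W m₁ m₂ n₁ n₂ p}
    {z : FIdx m₁ m₂ n₁ n₂ p} (hz : z ∈ (aM i v).support) :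
    ∃ x ∈ v.support, z.1.R + 1 = x.1.R := by
  rw [Finsupp.mem_support_iff, Finsupp.linearMap_apply_eq_sum] at hz
  obtain ⟨x, hx, hxz⟩ := Finset.exists_ne_zero_of_sum_ne_zero hz
  obtain ⟨hocc, hzx⟩ := aM_single_apply_ne_zero (right_ne_zero_of_mul hxz)
  have := FLabel.R_mapOcc i (· - 1) x.1
  exact ⟨x, hx, by rw [hzx]; omega⟩

theorem exists_single_mem_of_forall_R_eq_zero {U : Submodule ℝ (W m₁ m₂ n₁ n₂ p)}
    {v : W m₁ m₂ n₁ n₂ p} (hv : v ∈ U) (hv0 : v ≠ 0) (hR : ∀ x ∈ v.support, x.1.R = 0) :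
    ∃ x : FIdx m₁ m₂ n₁ n₂ p, x.1.R = 0 ∧ Finsupp.single x 1 ∈ U := by
  obtain ⟨y, hy⟩ := Finsupp.support_nonempty_iff.2 hv0
  refine ⟨y, hR y hy, Finsupp.single_one_mem_of_support_subset hv (Finsupp.mem_support_iff.1 hy)
    fun x hx => Finset.mem_singleton.2 (Subtype.ext (FLabel.eq_of_R_eq_zero (hR x hx) (hR y hy)))⟩

theorem exists_single_mem_of_aM_invariant {U : Submodule ℝ (W m₁ m₂ n₁ n₂ p)}
    (hU : ∀ i : Fin (m₁+m₂+n₁+n₂), ∀ v ∈ U, aM i v ∈ U) {v : W m₁ m₂ n₁ n₂ p} (hv : v ∈ U)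
    (hv0 : v ≠ 0) : ∃ x : FIdx m₁ m₂ n₁ n₂ p, x.1.R = 0 ∧ Finsupp.single x 1 ∈ U := by
  suffices ∀ N, ∀ v ∈ U, v ≠ 0 → (∀ x ∈ v.support, x.1.R ≤ N) →
      ∃ x : FIdx m₁ m₂ n₁ n₂ p, x.1.R = 0 ∧ Finsupp.single x 1 ∈ U from
    this _ v hv hv0 fun x hx => Finset.le_sup (f := fun x : FIdx m₁ m₂ n₁ n₂ p => x.1.R) hx
  intro N
  induction N with
  | zero =>
    exact fun v hv hv0 hN => exists_single_mem_of_forall_R_eq_zero hv hv0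
      fun x hx => Nat.le_zero.1 (hN x hx)
  | succ N ih =>
    intro v hv hv0 hN
    by_cases hpos : ∃ y ∈ v.support, 0 < y.1.R
    · obtain ⟨y, hy, hyR⟩ := hpos
      obtain ⟨i, hi⟩ := FLabel.exists_occ_pos hyR
      refine ih _ (hU i v hv) (aM_ne_zero (Finsupp.mem_support_iff.1 hy) hi) fun z hz => ?_
      obtain ⟨x, hx, hzx⟩ := exists_R_eq_succ_of_mem_support_aM hz
      have := hN x hx
      omega
    · push Not at hpos
      exact exists_single_mem_of_forall_R_eq_zero hv hv0 fun x hx => Nat.le_zero.1 (hpos x hx)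

theorem single_mem_of_aP_invariant {U : Submodule ℝ (W m₁ m₂ n₁ n₂ p)}
    (hU : ∀ i : Fin (m₁+m₂+n₁+n₂), ∀ v ∈ U, aP i v ∈ U) {x₀ : FIdx m₁ m₂ n₁ n₂ p}
    (hx₀ : x₀.1.R = 0) (h₀ : Finsupp.single x₀ 1 ∈ U) (x : FIdx m₁ m₂ n₁ n₂ p) :
    Finsupp.single x 1 ∈ U := by
  induction hN : x.1.R generalizing x with
  | zero => rwa [Subtype.ext (FLabel.eq_of_R_eq_zero hN hx₀)]
  | succ N ih =>
    obtain ⟨i, hi⟩ := FLabel.exists_occ_pos (by omega : 0 < x.1.R)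
    let y : FIdx m₁ m₂ n₁ n₂ p := ⟨x.1.mapOcc i (· - 1), FLabel.valid_mapOcc_pred i x.2⟩
    have hy : Finsupp.single y 1 ∈ U := by
      refine ih y ?_
      have := FLabel.R_mapOcc i (· - 1) x.1
      change (x.1.mapOcc i (· - 1)).R = N
      omega
    have hraise : y.1.mapOcc i (· + 1) = x.1 := FLabel.mapOcc_succ_mapOcc_pred hi
    obtain ⟨c, hc, he⟩ := aP_single i y (hraise ▸ x.2)
    rw [bvec_eq_smul_single c x hraise.symm] at he
    exact (U.smul_mem_iff hc).1 (he ▸ hU i _ hy)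

end Irreducibility

theorem fock_module_irreducible_general (m₁ m₂ n₁ n₂ p : ℕ) :
    ∀ U : Submodule ℝ (W m₁ m₂ n₁ n₂ p),
      (∀ i : Fin (m₁+m₂+n₁+n₂), ∀ v ∈ U, aP (p := p) i v ∈ U ∧ aM (p := p) i v ∈ U) →
      U = ⊥ ∨ U = ⊤ := by
  intro U hU
  refine or_iff_not_imp_left.2 fun hU0 => ?_
  obtain ⟨v, hv, hv0⟩ := (Submodule.ne_bot_iff U).1 hU0
  obtain ⟨x₀, hx₀, h₀⟩ := exists_single_mem_of_aM_invariant (fun i v hv => (hU i v hv).2) hv hv0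
  exact Submodule.eq_top_of_forall_single_one_mem
    (single_mem_of_aP_invariant (fun i v hv => (hU i v hv).1) hx₀ h₀)

theorem fock_module_irreducible (m₁ m₂ n₁ n₂ p : ℕ) (hp : 0 < p) :
    ∀ U : Submodule ℝ (W m₁ m₂ n₁ n₂ p),
      (∀ i : Fin (m₁+m₂+n₁+n₂), ∀ v ∈ U, aP (p := p) i v ∈ U ∧ aM (p := p) i v ∈ U) →
      U = ⊥ ∨ U = ⊤ :=
  fock_module_irreducible_general m₁ m₂ n₁ n₂ p
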